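/- For any partition λ and any positive integer k, the product of the Schur function s_λ with the elementary symmetric function e_k equals the sum of s_ν over all partitions ν such that ν/λ is a vertical strip with k boxes (Pieri rule for e_k). -/

import Mathlib

open MvPolynomial

/-- The content label of the box added at step `i` of a path. -/
noncomputable def pathLabel (p : ℕ → YoungDiagram) (i : ℕ) : ℤ :=
  ∑ c ∈ (p (i+1)).cells \ (p i).cells, ((c.2 : ℤ) - (c.1 : ℤ))

/-- `p` is a path in Young's lattice from `lam` to `nu` of length `k`,
adding one box at each step (constant equal to `nu` after step `k`). -/
def IsPath (lam nu : YoungDiagram) (k : ℕ) (p : ℕ → YoungDiagram) : Prop :=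
  p 0 = lam ∧ (∀ i, k ≤ i → p i = nu) ∧
    ∀ i < k, p i ≤ p (i+1) ∧ (p (i+1)).card = (p i).card + 1

/-- The labels of steps `a, a+1, …, b-1` form a strictly decreasing sequence. -/
def DecreasingOn (p : ℕ → YoungDiagram) (a b : ℕ) : Prop :=
  ∀ i, a ≤ i → i + 1 < b → pathLabel p (i+1) < pathLabel p i

/-- `nu / lam` is a vertical strip: at most one box in each row. -/
def IsVStrip (lam nu : YoungDiagram) : Prop :=
  lam ≤ nu ∧ ∀ i, nu.rowLen i ≤ lam.rowLen i + 1

/-- `(n,k)`-restricted partition: at most `n` parts and `0 < λ₁ - λ_n ≤ k`. -/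
def Restricted (n k : ℕ) (lam : YoungDiagram) : Prop :=
  lam.colLen 0 ≤ n ∧ 0 < lam.rowLen 0 - lam.rowLen (n-1) ∧
    lam.rowLen 0 - lam.rowLen (n-1) ≤ k

/-- `e_r` for integer index, zero for negative index. -/
noncomputable def Esym (n : ℕ) (r : ℤ) : MvPolynomial (Fin n) ℚ :=
  if 0 ≤ r then esymm (Fin n) ℚ r.toNat else 0

/-- Jacobi–Trudi determinant `det (e_{μ'_i - i + j})` of size `m`. -/
noncomputable def jacobiTrudi (n m : ℕ) (mu : YoungDiagram) : MvPolynomial (Fin n) ℚ :=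
  Matrix.det (Matrix.of fun i j : Fin m =>
    Esym n ((mu.colLen i : ℤ) - (i : ℕ) + (j : ℕ)))

/-- The Schur polynomial in `n` variables, defined via Jacobi–Trudi. -/
noncomputable def schurPoly (n : ℕ) (mu : YoungDiagram) : MvPolynomial (Fin n) ℚ :=
  jacobiTrudi n (mu.rowLen 0) mu

lemma Esym_isSymmetric (n : ℕ) (r : ℤ) : (Esym n r).IsSymmetric := by
  unfold Esym
  split
  · exact esymm_isSymmetric _ _ _
  · exact MvPolynomial.IsSymmetric.zero

lemma jacobiTrudi_isSymmetric (n m : ℕ) (mu : YoungDiagram) :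
    (jacobiTrudi n m mu).IsSymmetric := by
  intro e
  unfold jacobiTrudi
  rw [Matrix.det_apply, map_sum]
  refine Finset.sum_congr rfl fun σ _ => ?_
  rw [Units.smul_def, map_zsmul, map_prod]
  congr 1
  exact Finset.prod_congr rfl fun i _ => Esym_isSymmetric n _ e

lemma schurPoly_isSymmetric (n : ℕ) (mu : YoungDiagram) : (schurPoly n mu).IsSymmetric :=
  jacobiTrudi_isSymmetric n _ mu

/-- The Schur polynomial as an element of the subalgebra of symmetric polynomials. -/
noncomputable def schurSym (n : ℕ) (mu : YoungDiagram) : symmetricSubalgebra (Fin n) ℚ :=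
  ⟨schurPoly n mu, (mem_symmetricSubalgebra _).2 (schurPoly_isSymmetric n mu)⟩

noncomputable def esymmSym (n r : ℕ) : symmetricSubalgebra (Fin n) ℚ :=
  ⟨esymm (Fin n) ℚ r, (mem_symmetricSubalgebra _).2 (esymm_isSymmetric _ _ r)⟩

/-- The single-column partition `(1^r)`. -/
def oneColumn (r : ℕ) : YoungDiagram :=
  (YoungDiagram.ofRowLens [r] (List.sortedGE_iff_pairwise.2 (List.pairwise_singleton _ r))).transpose

/-- The ideal defining the level-`k` fusion algebra for `sl(n)`: generated by the
Schur polynomials `s_λ` with `λ₁ - λ_n = k + 1` (at most `n` parts) together with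
`s_{(1^n)} - 1`. -/
noncomputable def fusionIdeal (n k : ℕ) : Ideal (symmetricSubalgebra (Fin n) ℚ) :=
  Ideal.span ({x | ∃ lam : YoungDiagram, lam.colLen 0 ≤ n ∧
      lam.rowLen 0 - lam.rowLen (n-1) = k + 1 ∧ x = schurSym n lam} ∪
    {schurSym n (oneColumn n) - 1})

/-- The fusion algebra `F^{(n,k)}`. -/
abbrev FusionAlg (n k : ℕ) : Type :=
  symmetricSubalgebra (Fin n) ℚ ⧸ fusionIdeal n k

/-- Image of the Schur function `s_λ` in the fusion algebra. -/
noncomputable def fs (n k : ℕ) (lam : YoungDiagram) : FusionAlg n k :=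
  Ideal.Quotient.mk (fusionIdeal n k) (schurSym n lam)

noncomputable def fe (n k : ℕ) (r : ℕ) : FusionAlg n k :=
  Ideal.Quotient.mk (fusionIdeal n k) (esymmSym n r)


/-!
Write `c = lam.colLen`, `m = lam.rowLen 0` and `e_r = Esym n r`, and work with power series in
an auxiliary variable `X`. Let `S i j = ∑_d e_{c_i - i + j + d} X^d` for `i, j ≤ m`.
Subtracting `X ^ (c_{i-1} + 1 - c_i)` times row `i - 1` from row `i` truncates row `i` to the
terms with `c_i + d ≤ c_{i-1}`; row `0` is already truncated at `c_0 + d ≤ n`, as `e_r = 0` for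
`r > n`. Subtracting `X` times column `j + 1` from column `j < m` instead turns `S` into the
Jacobi–Trudi matrix of `lam` bordered by the last row `(0, …, 0, ∑_d e_d X^d)`. So the truncated
matrix has determinant `(∑_d e_d X^d) * s_lam`. Expanding it row by row, the coefficient of
`X^k` is the sum of the Jacobi–Trudi determinants of the diagrams obtained from `lam` by adding
`r_i` boxes to column `i`, where `c_i + r_i ≤ c_{i-1}` and `∑ r_i = k`: these are exactly the
`nu` with `nu / lam` a vertical strip of size `k` and `s_nu ≠ 0`.
-/

open Finset

namespace Matrix

variable {R : Type*} [CommRing R]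

theorem det_eq_of_forall_col_eq_sub_smul_succ {m : ℕ} {A B : Matrix (Fin (m + 1)) (Fin (m + 1)) R}
    (c : Fin m → R) (h_last : ∀ i, B i (Fin.last m) = A i (Fin.last m))
    (h_castSucc : ∀ i (j : Fin m), B i j.castSucc = A i j.castSucc - c j * A i j.succ) :
    det B = det A := by
  rw [← det_submatrix_equiv_self Fin.revPerm A, ← det_submatrix_equiv_self Fin.revPerm B]
  refine (det_eq_of_forall_col_eq_smul_add_pred (fun j => c j.rev) (fun i => (h_last _).symm)
    fun i j => ?_).symm
  simp only [submatrix_apply, Fin.revPerm_apply, Fin.rev_succ, Fin.rev_castSucc, h_castSucc]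
  ring

theorem det_succ_of_last_row_castSucc_eq_zero {m : ℕ} (A : Matrix (Fin (m + 1)) (Fin (m + 1)) R)
    (h : ∀ j : Fin m, A (Fin.last m) j.castSucc = 0) :
    det A = A (Fin.last m) (Fin.last m) * det (A.submatrix Fin.castSucc Fin.castSucc) := by
  rw [det_succ_row A (Fin.last m), Fin.sum_univ_castSucc, Finset.sum_eq_zero fun j _ => by
    rw [h j, mul_zero, zero_mul], zero_add, Fin.succAbove_last, Fin.val_last, ← two_mul,
    pow_mul, neg_one_sq, one_pow, one_mul]

end Matrix

theorem PowerSeries.coeff_det_of_sum_C_mul_X_pow {R : Type*} [CommRing R] {ι : Type*}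
    [Fintype ι] [DecidableEq ι] (s : ι → Finset ℕ) (v : ι → ℕ → ι → R) (k : ℕ) :
    coeff k (Matrix.of fun i j => ∑ d ∈ s i, C (v i d j) * X ^ d).det =
      ∑ r ∈ (Fintype.piFinset s).filter (fun r => ∑ i, r i = k),
        (Matrix.of fun i j => v i (r i) j).det := by
  have expand : (Matrix.of fun i j => ∑ d ∈ s i, C (v i d j) * X ^ d).det =
      ∑ r ∈ Fintype.piFinset s, (Matrix.of fun i j => C (v i (r i) j) * X ^ r i).det := by
    have hrows : (Matrix.of fun i j => ∑ d ∈ s i, C (v i d j) * (X : PowerSeries R) ^ d) =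
        fun i => ∑ d ∈ s i, fun j => C (v i d j) * X ^ d := by
      ext i j
      simp [Finset.sum_apply]
    rw [hrows]
    exact (Matrix.detRowAlternating (R := PowerSeries R) (n := ι)).toMultilinearMap.map_sum_finset
      (fun i d j => C (v i d j) * X ^ d) s
  have hrow (r : ι → ℕ) : (Matrix.of fun i j => C (v i (r i) j) * X ^ r i).det =
      C (Matrix.of fun i j => v i (r i) j).det * X ^ (∑ i, r i) := by
    rw [RingHom.map_det, ← Finset.prod_pow_eq_pow_sum, mul_comm, ← Matrix.det_mul_column]
    congr 1
    ext i j
    simp [mul_comm]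
  simp only [expand, hrow, map_sum, coeff_C_mul_X_pow, Finset.sum_filter, eq_comm]

namespace MvPolynomial

theorem esymm_eq_zero_of_card_lt {σ R : Type*} [Fintype σ] [CommSemiring R] {k : ℕ}
    (h : Fintype.card σ < k) : esymm σ R k = 0 := by
  rw [esymm, powersetCard_eq_empty.2 (by simpa using h), sum_empty]

end MvPolynomial

section Esym

variable {n : ℕ}

theorem Esym_of_neg {r : ℤ} (h : r < 0) : Esym n r = 0 := if_neg (by omega)

theorem Esym_natCast (k : ℕ) : Esym n k = esymm (Fin n) ℚ k := by
  rw [Esym, if_pos k.cast_nonneg, Int.toNat_natCast]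

theorem Esym_zero : Esym n 0 = 1 := by
  simpa using Esym_natCast (n := n) 0

theorem Esym_of_lt {r : ℤ} (h : n < r) : Esym n r = 0 := by
  lift r to ℕ using by omega
  rw [Esym_natCast, esymm_eq_zero_of_card_lt (by simpa using h)]

end Esym

namespace YoungDiagram

theorem colLen_eq_zero_of_rowLen_le {μ : YoungDiagram} {j : ℕ} (h : μ.rowLen 0 ≤ j) :
    μ.colLen j = 0 := by
  by_contra hj
  have := mem_iff_lt_rowLen.1 (mem_iff_lt_colLen.2 (Nat.pos_of_ne_zero hj) : (0, j) ∈ μ)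
  omega

theorem le_iff_colLen_le {μ ν : YoungDiagram} : μ ≤ ν ↔ ∀ j, μ.colLen j ≤ ν.colLen j := by
  refine ⟨fun h j => ?_, fun h => ?_⟩
  · by_contra! hj
    have := mem_iff_lt_colLen.1 (h (mem_iff_lt_colLen.2 hj : (ν.colLen j, j) ∈ μ))
    omega
  · rintro ⟨i, j⟩ hij
    exact mem_iff_lt_colLen.2 ((mem_iff_lt_colLen.1 hij).trans_le (h j))

theorem ext_colLen {μ ν : YoungDiagram} (h : ∀ j, μ.colLen j = ν.colLen j) : μ = ν :=
  le_antisymm (le_iff_colLen_le.2 fun j => (h j).le) (le_iff_colLen_le.2 fun j => (h j).ge)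

theorem card_eq_sum_colLen {μ : YoungDiagram} {M : ℕ} (h : μ.rowLen 0 ≤ M) :
    μ.card = ∑ j : Fin M, μ.colLen j := by
  have hmaps : ∀ c ∈ μ.cells, c.2 ∈ range M := fun ⟨i, j⟩ hc => by
    have := mem_iff_lt_rowLen.1 ((mem_cells _).1 hc)
    have := μ.rowLen_anti 0 i i.zero_le
    simp only [mem_range]
    omega
  rw [YoungDiagram.card, card_eq_sum_card_fiberwise hmaps, Fin.sum_univ_eq_sum_range]
  exact sum_congr rfl fun j _ => (colLen_eq_card μ).symm

/-- Columns `g 0, …, g (M - 1)`; requiring `∀ j' ≤ j` makes the cells a lower set even when `g`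
is not antitone. -/
def ofColLens (M : ℕ) (g : ℕ → ℕ) : YoungDiagram where
  cells := (range (g 0) ×ˢ range M).filter fun c => ∀ j ≤ c.2, c.1 < g j
  isLowerSet := by
    rintro ⟨i, j⟩ ⟨i', j'⟩ ⟨hi, hj⟩ hm
    simp only [coe_filter, mem_product, mem_range, Set.mem_ofPred_eq] at hm ⊢
    exact ⟨⟨by omega, by omega⟩, fun j'' hj'' => hi.trans_lt (hm.2 j'' (hj''.trans hj))⟩

theorem mem_ofColLens {M : ℕ} {g : ℕ → ℕ} {i j : ℕ} :
    (i, j) ∈ ofColLens M g ↔ j < M ∧ ∀ j' ≤ j, i < g j' := by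
  change (i, j) ∈ (range (g 0) ×ˢ range M).filter _ ↔ _
  simp only [mem_filter, mem_product, mem_range]
  exact ⟨fun h => ⟨h.1.2, h.2⟩, fun h => ⟨⟨h.2 0 j.zero_le, h.1⟩, h.2⟩⟩

theorem colLen_ofColLens {M : ℕ} {g : ℕ → ℕ} (hg : ∀ j, j + 1 < M → g (j + 1) ≤ g j)
    {j : ℕ} (hj : j < M) : (ofColLens M g).colLen j = g j := by
  have hanti : ∀ j' ≤ j, g j ≤ g j' := by
    intro j' hj'
    induction j, hj' using Nat.le_induction with
    | base => rfl
    | succ j _ ih => exact (hg j hj).trans (ih (by omega))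
  refine eq_of_forall_lt_iff fun i => ?_
  rw [← mem_iff_lt_colLen, mem_ofColLens]
  exact ⟨fun h => h.2 j le_rfl, fun h => ⟨hj, fun j' hj' => h.trans_le (hanti j' hj')⟩⟩

theorem rowLen_ofColLens_le (M : ℕ) (g : ℕ → ℕ) : (ofColLens M g).rowLen 0 ≤ M := by
  by_contra! h
  exact lt_irrefl M (mem_ofColLens.1 (mem_iff_lt_rowLen.2 h : (0, M) ∈ ofColLens M g)).1

end YoungDiagram

theorem jacobiTrudi_succ (n : ℕ) {M : ℕ} {μ : YoungDiagram} (h : μ.rowLen 0 ≤ M) :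
    jacobiTrudi n (M + 1) μ = jacobiTrudi n M μ := by
  have hM : μ.colLen M = 0 := YoungDiagram.colLen_eq_zero_of_rowLen_le h
  rw [jacobiTrudi, Matrix.det_succ_of_last_row_castSucc_eq_zero _ fun j => ?_]
  · simp only [Matrix.of_apply, Fin.val_last, hM]
    rw [show ((0 : ℕ) : ℤ) - M + M = 0 by ring, Esym_zero, one_mul]
    rfl
  · simp only [Matrix.of_apply, Fin.val_last, hM, Fin.val_castSucc]
    exact Esym_of_neg (by omega)

theorem jacobiTrudi_eq_schurPoly (n : ℕ) {M : ℕ} {μ : YoungDiagram} (h : μ.rowLen 0 ≤ M) :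
    jacobiTrudi n M μ = schurPoly n μ := by
  induction M, h using Nat.le_induction with
  | base => rfl
  | succ M hM ih => rw [jacobiTrudi_succ n hM, ih]

theorem schurPoly_eq_zero_of_lt_colLen {n : ℕ} {μ : YoungDiagram} (h : n < μ.colLen 0) :
    schurPoly n μ = 0 := by
  have hpos : 0 < μ.rowLen 0 := by
    by_contra! h0
    rw [YoungDiagram.colLen_eq_zero_of_rowLen_le h0] at h
    omega
  exact Matrix.det_eq_zero_of_row_eq_zero ⟨0, hpos⟩ fun j =>
    (Matrix.of_apply _ _ _).trans (Esym_of_lt (by push_cast; omega))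

section GeneratingSeries

variable (n : ℕ)

/-- `X⁻ᵃ (∑ₖ eₖ Xᵏ)` with the negative powers of `X` discarded. -/
noncomputable def esymmSeries (a : ℤ) : PowerSeries (MvPolynomial (Fin n) ℚ) :=
  PowerSeries.mk fun d => Esym n (a + d)

theorem esymmSeries_eq_sum_add_X_pow_mul (a : ℤ) (t : ℕ) :
    esymmSeries n a = ∑ d ∈ range t, PowerSeries.C (Esym n (a + d)) * PowerSeries.X ^ d +
      PowerSeries.X ^ t * esymmSeries n (a + t) := by
  refine PowerSeries.ext fun d => ?_
  simp only [esymmSeries, map_add, map_sum, PowerSeries.coeff_C_mul_X_pow,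
    PowerSeries.coeff_X_pow_mul', PowerSeries.coeff_mk, sum_ite_eq, mem_range]
  by_cases h : d < t
  · simp [h, not_le.2 h]
  · simp [h, not_lt.1 h, Nat.cast_sub (not_lt.1 h)]

theorem esymmSeries_eq_zero {a : ℤ} (h : n < a) : esymmSeries n a = 0 :=
  PowerSeries.ext fun d => Esym_of_lt (by omega)

theorem esymmSeries_zero : esymmSeries n 0 = PowerSeries.mk fun d => esymm (Fin n) ℚ d := by
  refine PowerSeries.ext fun d => ?_
  simp [esymmSeries, Esym_natCast]

end GeneratingSeries

section PieriMatrix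

variable (n : ℕ) (lam : YoungDiagram)

/-- The largest length the `j`-th column of `ν` may have when `ν / lam` is a vertical strip
and `schurPoly n ν ≠ 0`. -/
def maxColLen (j : ℕ) : ℕ := if j = 0 then n else lam.colLen (j - 1)

theorem maxColLen_zero : maxColLen n lam 0 = n := if_pos rfl

theorem maxColLen_succ (j : ℕ) : maxColLen n lam (j + 1) = lam.colLen j := by
  simp [maxColLen]

/-- Row `i` collects, as powers `X ^ d`, the Jacobi–Trudi rows obtained by adding `d` boxes
to column `i` of `lam`. -/
noncomputable def pieriMatrix : Matrix (Fin (lam.rowLen 0 + 1)) (Fin (lam.rowLen 0 + 1))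
    (PowerSeries (MvPolynomial (Fin n) ℚ)) :=
  Matrix.of fun i j => ∑ d ∈ range (maxColLen n lam i + 1 - lam.colLen i),
    PowerSeries.C (Esym n (lam.colLen i - i + j + d)) * PowerSeries.X ^ d

theorem det_pieriMatrix :
    (pieriMatrix n lam).det =
      PowerSeries.mk (fun d => esymm (Fin n) ℚ d) * PowerSeries.C (schurPoly n lam) := by
  set m := lam.rowLen 0
  set c := lam.colLen
  let S : Matrix (Fin (m + 1)) (Fin (m + 1)) _ :=
    Matrix.of fun i j => esymmSeries n (c i - i + j)
  let T : Matrix (Fin (m + 1)) (Fin (m + 1)) _ := Matrix.of fun i j =>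
    if (j : ℕ) < m then PowerSeries.C (Esym n (c i - i + j)) else esymmSeries n (c i - i + j)
  have hrows : (pieriMatrix n lam).det = S.det := by
    refine (Matrix.det_eq_of_forall_row_eq_smul_add_pred
      (fun i => PowerSeries.X ^ (c i + 1 - c (i + 1))) (fun j => ?_) fun i j => ?_).symm
    · simp only [S, pieriMatrix, Matrix.of_apply, Fin.val_zero, maxColLen_zero]
      rw [esymmSeries_eq_sum_add_X_pow_mul n _ (n + 1 - c 0), esymmSeries_eq_zero n (by omega),
        mul_zero, add_zero]
    · have hc : c (i + 1) ≤ c i := lam.colLen_anti _ _ (Nat.le_succ _)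
      simp only [S, pieriMatrix, Matrix.of_apply, Fin.val_succ, Fin.val_castSucc, maxColLen_succ]
      rw [esymmSeries_eq_sum_add_X_pow_mul n _ (c i + 1 - c (i + 1))]
      congr 3
      omega
  have hcols : S.det = T.det := by
    refine (Matrix.det_eq_of_forall_col_eq_sub_smul_succ (fun _ => PowerSeries.X)
      (fun i => if_neg (by simp)) fun i j => ?_).symm
    simp only [T, S, Matrix.of_apply, Fin.val_castSucc, j.isLt, if_true, Fin.val_succ]
    rw [esymmSeries_eq_sum_add_X_pow_mul n _ 1]
    simp [add_assoc]
  have hcm : c m = 0 := YoungDiagram.colLen_eq_zero_of_rowLen_le le_rfl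
  rw [hrows, hcols, Matrix.det_succ_of_last_row_castSucc_eq_zero T fun j => ?_]
  congr 1
  · simp only [T, Matrix.of_apply, Fin.val_last, lt_irrefl, if_false, hcm]
    rw [show ((0 : ℕ) : ℤ) - m + m = 0 by ring, esymmSeries_zero]
  · rw [schurPoly, jacobiTrudi, RingHom.map_det]
    congr 1
    exact Matrix.ext fun i j => by simp [T, c]
  · simp only [T, Matrix.of_apply, Fin.val_castSucc, j.isLt, if_true, Fin.val_last, hcm]
    rw [Esym_of_neg (by omega), map_zero]

def vStripIncrements (k : ℕ) : Finset (Fin (lam.rowLen 0 + 1) → ℕ) :=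
  (Fintype.piFinset fun i : Fin (lam.rowLen 0 + 1) =>
    range (maxColLen n lam i + 1 - lam.colLen i)).filter fun r => ∑ i, r i = k

theorem mem_vStripIncrements {k : ℕ} {r : Fin (lam.rowLen 0 + 1) → ℕ} :
    r ∈ vStripIncrements n lam k ↔
      (∀ i : Fin (lam.rowLen 0 + 1), lam.colLen i + r i ≤ maxColLen n lam i) ∧
        ∑ i, r i = k := by
  simp only [vStripIncrements, mem_filter, Fintype.mem_piFinset, mem_range]
  exact and_congr_left' (forall_congr' fun i => by omega)

theorem esymm_mul_schurPoly (k : ℕ) :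
    esymm (Fin n) ℚ k * schurPoly n lam = ∑ r ∈ vStripIncrements n lam k,
      (Matrix.of fun i j : Fin (lam.rowLen 0 + 1) => Esym n (lam.colLen i - i + j + r i)).det := by
  have h := congrArg (PowerSeries.coeff k) (det_pieriMatrix n lam)
  rw [pieriMatrix, PowerSeries.coeff_det_of_sum_C_mul_X_pow, PowerSeries.coeff_mul_C,
    PowerSeries.coeff_mk] at h
  exact h.symm

end PieriMatrix

section VStrip

open YoungDiagram

variable {n : ℕ} {lam : YoungDiagram}

theorem isVStrip_iff_colLen {nu : YoungDiagram} :
    IsVStrip lam nu ↔ ∀ j, lam.colLen j ≤ nu.colLen j ∧ nu.colLen (j + 1) ≤ lam.colLen j := by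
  refine ⟨fun ⟨hle, hrow⟩ j => ⟨le_iff_colLen_le.1 hle j, ?_⟩, fun h => ⟨?_, fun i => ?_⟩⟩
  · by_contra! hj
    have h1 := mem_iff_lt_rowLen.1 (mem_iff_lt_colLen.2 hj : (lam.colLen j, j + 1) ∈ nu)
    have h2 := mem_iff_lt_colLen.1
      (mem_iff_lt_rowLen.2 (by have := hrow (lam.colLen j); omega) : (lam.colLen j, j) ∈ lam)
    omega
  · exact le_iff_colLen_le.2 fun j => (h j).1
  · by_contra! hi
    have h1 := mem_iff_lt_colLen.1
      (mem_iff_lt_rowLen.2 hi : (i, lam.rowLen i + 1) ∈ nu)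
    have h2 := mem_iff_lt_rowLen.1
      (mem_iff_lt_colLen.2 (h1.trans_le (h _).2) : (i, lam.rowLen i) ∈ lam)
    omega

def addToCols (lam : YoungDiagram) (r : Fin (lam.rowLen 0 + 1) → ℕ) : YoungDiagram :=
  ofColLens (lam.rowLen 0 + 1) fun j =>
    if h : j < lam.rowLen 0 + 1 then lam.colLen j + r ⟨j, h⟩ else 0

theorem rowLen_addToCols_le (r : Fin (lam.rowLen 0 + 1) → ℕ) :
    (addToCols lam r).rowLen 0 ≤ lam.rowLen 0 + 1 :=
  rowLen_ofColLens_le _ _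

theorem colLen_addToCols {r : Fin (lam.rowLen 0 + 1) → ℕ}
    (hr : ∀ i : Fin (lam.rowLen 0 + 1), lam.colLen i + r i ≤ maxColLen n lam i)
    (i : Fin (lam.rowLen 0 + 1)) : (addToCols lam r).colLen i = lam.colLen i + r i := by
  rw [addToCols, colLen_ofColLens (fun j hj => ?_) i.isLt, dif_pos i.isLt]
  have := hr ⟨j + 1, hj⟩
  simp only [maxColLen_succ] at this
  rw [dif_pos hj, dif_pos (by omega)]
  omega

theorem schurPoly_addToCols {r : Fin (lam.rowLen 0 + 1) → ℕ}
    (hr : ∀ i : Fin (lam.rowLen 0 + 1), lam.colLen i + r i ≤ maxColLen n lam i) :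
    schurPoly n (addToCols lam r) =
      (Matrix.of fun i j : Fin (lam.rowLen 0 + 1) => Esym n (lam.colLen i - i + j + r i)).det := by
  rw [← jacobiTrudi_eq_schurPoly n (rowLen_addToCols_le r), jacobiTrudi]
  congr 1
  refine Matrix.ext fun i j => ?_
  simp only [Matrix.of_apply, colLen_addToCols hr]
  congr 1
  push_cast
  ring

theorem card_addToCols {r : Fin (lam.rowLen 0 + 1) → ℕ}
    (hr : ∀ i : Fin (lam.rowLen 0 + 1), lam.colLen i + r i ≤ maxColLen n lam i) :
    (addToCols lam r).card = lam.card + ∑ i, r i := by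
  rw [card_eq_sum_colLen (rowLen_addToCols_le r), card_eq_sum_colLen (M := lam.rowLen 0 + 1)
    (by omega), ← sum_add_distrib]
  exact sum_congr rfl fun i _ => colLen_addToCols hr i

theorem isVStrip_addToCols {r : Fin (lam.rowLen 0 + 1) → ℕ}
    (hr : ∀ i : Fin (lam.rowLen 0 + 1), lam.colLen i + r i ≤ maxColLen n lam i) :
    IsVStrip lam (addToCols lam r) := by
  refine isVStrip_iff_colLen.2 fun j => ⟨?_, ?_⟩
  · by_cases h : j < lam.rowLen 0 + 1
    · simp only [colLen_addToCols hr ⟨j, h⟩]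
      omega
    · rw [colLen_eq_zero_of_rowLen_le (by omega : lam.rowLen 0 ≤ j)]
      omega
  · by_cases h : j + 1 < lam.rowLen 0 + 1
    · have := hr ⟨j + 1, h⟩
      simp only [maxColLen_succ] at this
      simp only [colLen_addToCols hr ⟨j + 1, h⟩]
      omega
    · rw [colLen_eq_zero_of_rowLen_le ((rowLen_addToCols_le r).trans (by omega))]
      omega

theorem exists_addToCols_eq {k : ℕ} {ν : YoungDiagram} (hν : IsVStrip lam ν)
    (hcard : ν.card = lam.card + k) (hn : ν.colLen 0 ≤ n) :
    ∃ r ∈ vStripIncrements n lam k, addToCols lam r = ν := by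
  have hcols := isVStrip_iff_colLen.1 hν
  have hrow : ν.rowLen 0 ≤ lam.rowLen 0 + 1 := hν.2 0
  let r : Fin (lam.rowLen 0 + 1) → ℕ := fun i => ν.colLen i - lam.colLen i
  have hle : ∀ i : Fin (lam.rowLen 0 + 1), lam.colLen i + r i ≤ maxColLen n lam i := by
    intro i
    have := (hcols i).1
    simp only [r, maxColLen]
    split_ifs with hi
    · rw [hi] at this ⊢
      omega
    · have := (hcols (i - 1)).2
      rw [Nat.sub_add_cancel (Nat.one_le_iff_ne_zero.2 hi)] at this
      omega
  refine ⟨r, (mem_vStripIncrements n lam).2 ⟨hle, ?_⟩, ext_colLen fun j => ?_⟩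
  · rw [sum_tsub_distrib (f := fun i : Fin _ => ν.colLen i) _ fun i _ => (hcols i).1,
      ← card_eq_sum_colLen hrow, ← card_eq_sum_colLen (by omega), hcard, Nat.add_sub_cancel_left]
  · by_cases hj : j < lam.rowLen 0 + 1
    · rw [colLen_addToCols hle ⟨j, hj⟩]
      have := (hcols j).1
      simp only [r]
      omega
    · rw [colLen_eq_zero_of_rowLen_le ((rowLen_addToCols_le r).trans (by omega)),
        colLen_eq_zero_of_rowLen_le (hrow.trans (by omega))]

theorem addToCols_injOn (k : ℕ) : Set.InjOn (addToCols lam) (vStripIncrements n lam k) := by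
  intro r hr r' hr' h
  funext i
  have := colLen_addToCols ((mem_vStripIncrements n lam).1 hr).1 i
  rw [h, colLen_addToCols ((mem_vStripIncrements n lam).1 hr').1 i] at this
  omega

end VStrip

theorem stmt1_general (n k : ℕ) (lam : YoungDiagram) :
    schurPoly n lam * MvPolynomial.esymm (Fin n) ℚ k =
      ∑ᶠ nu ∈ {nu : YoungDiagram | IsVStrip lam nu ∧ nu.card = lam.card + k},
        schurPoly n nu := by
  classical
  rw [mul_comm, esymm_mul_schurPoly, finsum_mem_eq_sum_of_subset
    (t := (vStripIncrements n lam k).image (addToCols lam)) _ ?_ ?_, sum_image (addToCols_injOn k)]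
  · exact sum_congr rfl fun r hr =>
      (schurPoly_addToCols ((mem_vStripIncrements n lam).1 hr).1).symm
  · rintro ν ⟨⟨hν, hcard⟩, hs⟩
    obtain ⟨r, hr, rfl⟩ := exists_addToCols_eq hν hcard
      (not_lt.1 fun h => hs (schurPoly_eq_zero_of_lt_colLen h))
    exact mem_image_of_mem _ hr
  · intro ν hν
    obtain ⟨r, hr, rfl⟩ := mem_image.1 hν
    obtain ⟨hle, rfl⟩ := (mem_vStripIncrements n lam).1 hr
    exact ⟨isVStrip_addToCols hle, card_addToCols hle⟩

/-- Pieri rule: `s_lam * e_k` is the sum of `s_nu` over partitions `nu` with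
`nu/lam` a vertical strip of `k` boxes. -/
theorem stmt1 (n k : ℕ) (hk : 0 < k) (lam : YoungDiagram) :
    schurPoly n lam * MvPolynomial.esymm (Fin n) ℚ k =
      ∑ᶠ nu ∈ {nu : YoungDiagram | IsVStrip lam nu ∧ nu.card = lam.card + k},
        schurPoly n nu :=
  stmt1_general n k lam
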